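/- arXiv:2603.18920 — 2 statements merged into one kernel-verified Lean document; each statement's English description precedes it below -/
import Mathlib

section
/- Let K be a finite nonempty index set with weights w_k > 0 and sensitivities λ_k ∈ (0,1]. Define the block profit Π(p, q) = (p - c) * Σ_{k∈K} w_k [1/2 + λ_k (q - p)/(2τ)]. Then the unique symmetric equilibrium price (the unique p with ∂Π/∂p(p,p) = 0) is p = c + τ / λ̄, where λ̄ = (Σ_k w_k λ_k)/(Σ_k w_k). -/
/-- Block Hotelling game: the unique symmetric equilibrium price
(critical point of own-profit against rival price p) is c + τ/λ̄. -/
theorem stmt2 {ι : Type*} (K : Finset ι) (hK : K.Nonempty) (w lam : ι → ℝ)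
    (hw : ∀ k ∈ K, 0 < w k) (hlam : ∀ k ∈ K, lam k ∈ Set.Ioc (0:ℝ) 1)
    (τ c : ℝ) (hτ : 0 < τ) (hc : 0 < c) (p : ℝ) :
    deriv (fun x => (x - c) * ∑ k ∈ K, w k * (1/2 + lam k * (p - x)/(2*τ))) p = 0
      ↔ p = c + τ / ((∑ k ∈ K, w k * lam k) / (∑ k ∈ K, w k)) := by
  set S := ∑ k ∈ K, w k with hS
  set L := ∑ k ∈ K, w k * lam k with hL
  have hSpos : 0 < S := Finset.sum_pos hw hK
  have hLpos : 0 < L :=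
    Finset.sum_pos (fun k hk => mul_pos (hw k hk) (hlam k hk).1) hK
  have hfun : (fun x => (x - c) * ∑ k ∈ K, w k * (1/2 + lam k * (p - x)/(2*τ)))
      = fun x => (x - c) * (S/2 + L * (p - x)/(2*τ)) := by
    funext x
    congr 1
    rw [show S/2 + L * (p - x)/(2*τ) = ∑ k ∈ K, (w k/2 + w k * lam k * (p - x)/(2*τ)) from by
      rw [hS, hL, Finset.sum_mul, Finset.sum_div, Finset.sum_div, ← Finset.sum_add_distrib]]
    exact Finset.sum_congr rfl fun k _ => by ring
  rw [hfun]
  have hd : HasDerivAt (fun x => (x - c) * (S/2 + L * (p - x)/(2*τ)))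
      (1 * (S/2 + L * (p - p)/(2*τ)) + (p - c) * (0 + L * (0 - 1)/(2*τ))) p := by
    apply HasDerivAt.mul
    · simpa using (hasDerivAt_id p).sub_const c
    · exact (hasDerivAt_const p (S/2)).add
        ((((hasDerivAt_const p p).sub (hasDerivAt_id p)).const_mul L).div_const (2*τ))
  rw [hd.deriv, div_div_eq_mul_div]
  constructor
  · intro h
    have hL' : L ≠ 0 := hLpos.ne'
    field_simp
    field_simp at h
    nlinarith [h]
  · intro h
    have hL' : L ≠ 0 := hLpos.ne'
    subst h
    field_simp
    ring
end

section
/- Let a_k > 0 and y_k be given for k = 0,…,n, and let p* be the minimizer of Σ_k a_k (p_k - y_k)^2 over weakly decreasing sequences. Then on any maximal constant block K of p* (a maximal set of consecutive indices where p* is constant), the common value equals the weighted average (Σ_{k∈K} a_k y_k)/(Σ_{k∈K} a_k). -/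
/-- On a maximal constant block of the weighted isotonic regression minimizer,
the common value equals the weighted average of the data on the block. -/
theorem stmt8 (n : ℕ) (a y : Fin (n+1) → ℝ) (ha : ∀ k, 0 < a k)
    (p : Fin (n+1) → ℝ) (hp : Antitone p)
    (hmin : ∀ q, Antitone q →
      ∑ k, a k * (p k - y k)^2 ≤ ∑ k, a k * (q k - y k)^2)
    (i j : Fin (n+1)) (hij : i ≤ j) (v : ℝ)
    (hconst : ∀ k, i ≤ k → k ≤ j → p k = v)
    (hbefore : ∀ k, k < i → v < p k)
    (hafter : ∀ k, j < k → p k < v) :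
    v = (∑ k ∈ Finset.Icc i j, a k * y k) / (∑ k ∈ Finset.Icc i j, a k) := by
  classical
  set K := Finset.Icc i j with hK
  have hKne : K.Nonempty := ⟨i, by simp [hK, hij]⟩
  set S := ∑ k ∈ K, a k with hS
  have hSpos : 0 < S := Finset.sum_pos (fun k _ => ha k) hKne
  set T := ∑ k ∈ K, a k * y k with hT
  set D := ∑ k ∈ K, a k * (v - y k) with hD
  clear_value S T D
  have hDval : D = v * S - T := by
    have : ∀ k ∈ K, a k * (v - y k) = v * a k - a k * y k := fun k _ => by ring
    rw [hD, Finset.sum_congr rfl this, Finset.sum_sub_distrib, ← Finset.mul_sum,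
      hS, hT]
  set G : Finset ℝ := insert 1
      (((Finset.univ.filter (fun k => k < i)).image (fun k => p k - v)) ∪
       ((Finset.univ.filter (fun k => j < k)).image (fun k => v - p k))) with hG
  have hGne : G.Nonempty := ⟨1, Finset.mem_insert_self _ _⟩
  set δ := G.min' hGne with hδ
  have hδpos : 0 < δ := by
    rw [hδ]
    refine (Finset.lt_min'_iff _ _).mpr ?_
    intro b hb
    simp only [hG, Finset.mem_insert, Finset.mem_union, Finset.mem_image,
      Finset.mem_filter, Finset.mem_univ, true_and] at hb
    rcases hb with h1 | ⟨k, hk, hkb⟩ | ⟨k, hk, hkb⟩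
    · simp [h1]
    · have := hbefore k hk; linarith [hkb ▸ sub_pos.mpr this]
    · have := hafter k hk; linarith [hkb ▸ sub_pos.mpr this]
  have hδi : ∀ k, k < i → δ ≤ p k - v := by
    intro k hk
    rw [hδ]
    apply Finset.min'_le
    simp only [hG, Finset.mem_insert, Finset.mem_union, Finset.mem_image,
      Finset.mem_filter, Finset.mem_univ, true_and]
    exact Or.inr (Or.inl ⟨k, hk, rfl⟩)
  have hδj : ∀ k, j < k → δ ≤ v - p k := by
    intro k hk
    rw [hδ]
    apply Finset.min'_le
    simp only [hG, Finset.mem_insert, Finset.mem_union, Finset.mem_image,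
      Finset.mem_filter, Finset.mem_univ, true_and]
    exact Or.inr (Or.inr ⟨k, hk, rfl⟩)
  clear_value δ
  have key : ∀ ε : ℝ, |ε| ≤ δ → 0 ≤ 2*ε*D + ε^2*S := by
    intro ε hε
    obtain ⟨hεge, hεle⟩ := abs_le.mp hε
    set q : Fin (n+1) → ℝ := fun k => p k + if k ∈ K then ε else 0 with hq
    have hqa : Antitone q := by
      intro k l hkl
      simp only [hq]
      by_cases hk : k ∈ K <;> by_cases hl : l ∈ K
      · obtain ⟨hk1, hk2⟩ := Finset.mem_Icc.mp hk
        obtain ⟨hl1, hl2⟩ := Finset.mem_Icc.mp hl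
        simp [hk, hl, hconst k hk1 hk2, hconst l hl1 hl2]
      · obtain ⟨hk1, hk2⟩ := Finset.mem_Icc.mp hk
        have hjl : j < l := by
          by_contra h
          push_neg at h
          exact hl (Finset.mem_Icc.mpr ⟨le_trans hk1 hkl, h⟩)
        have h2 := hδj l hjl
        simp only [hk, if_pos, hl, if_neg, not_false_iff, add_zero,
          hconst k hk1 hk2]
        linarith
      · obtain ⟨hl1, hl2⟩ := Finset.mem_Icc.mp hl
        have hki : k < i := by
          by_contra h
          push_neg at h
          exact hk (Finset.mem_Icc.mpr ⟨h, le_trans hkl hl2⟩)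
        have h1 := hδi k hki
        simp only [hk, if_neg, not_false_iff, add_zero, hl, if_pos,
          hconst l hl1 hl2]
        linarith
      · simp only [hk, hl, if_neg, not_false_iff, add_zero]
        exact hp hkl
    have hsum : ∑ k, a k * (q k - y k)^2
        = ∑ k, a k * (p k - y k)^2 + (2*ε*D + ε^2*S) := by
      have pt : ∀ k, a k * (q k - y k)^2
          = a k * (p k - y k)^2 + (if k ∈ K then a k * (2*ε*(v - y k) + ε^2) else 0) := by
        intro k
        by_cases hk : k ∈ K
        · obtain ⟨h1, h2⟩ := Finset.mem_Icc.mp hk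
          simp only [hq, hk, if_pos, hconst k h1 h2]
          ring
        · simp [hq, hk]
      rw [Finset.sum_congr rfl (fun k _ => pt k), Finset.sum_add_distrib]
      congr 1
      rw [Finset.sum_ite_mem, Finset.univ_inter, hD, hS, Finset.mul_sum,
        Finset.mul_sum, ← Finset.sum_add_distrib]
      exact Finset.sum_congr rfl (fun k _ => by ring)
    have hm := hmin q hqa
    rw [hsum] at hm
    linarith
  have hD0 : D = 0 := by
    by_contra hDne
    have hDabs : 0 < |D| := abs_pos.mpr hDne
    set c := min (δ / |D|) (1 / S) with hc
    clear_value c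
    have hcpos : 0 < c := by
      rw [hc]; exact lt_min (div_pos hδpos hDabs) (div_pos one_pos hSpos)
    have hcS : c * S ≤ 1 := by
      have h1 : c ≤ 1 / S := by rw [hc]; exact min_le_right _ _
      have := (le_div_iff₀ hSpos).mp h1
      linarith
    have hεabs : |(-c*D)| ≤ δ := by
      have h1 : c ≤ δ / |D| := by rw [hc]; exact min_le_left _ _
      rw [neg_mul, abs_neg, abs_mul, abs_of_pos hcpos]
      exact (le_div_iff₀ hDabs).mp h1
    have hkey := key (-c*D) hεabs
    have heq : 2*(-c*D)*D + (-c*D)^2*S = c*D^2*(c*S-2) := by ring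
    rw [heq] at hkey
    have hneg : c*D^2*(c*S-2) < 0 :=
      mul_neg_of_pos_of_neg (by positivity) (by linarith)
    linarith
  have hvS : v * S - T = 0 := hDval ▸ hD0
  rw [eq_div_iff (ne_of_gt hSpos)]
  linarith
end
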